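/- Let (Ω, 𝓕, P) be a probability space with a filtration 𝓕_1 ⊆ 𝓕_2 ⊆ … ⊆ 𝓕, let d, T be positive integers, and let γ > 0, r ≥ 0, b ≥ 0, G ≥ 0, λ ≥ 0 be real numbers. Let w_1, …, w_{T+1} ∈ ℝ^d be deterministic comparators with ‖w_t‖ ≤ r. Let θ_1, …, θ_{T+1} : Ω → ℝ^d be random iterates, g_1, …, g_T : Ω → ℝ^d be bounded 𝓕_t-measurable random vectors (g_t being 𝓕_t-measurable), and η_1, …, η_T : Ω → ℝ^d be square-integrable random vectors such that: θ_t is 𝓕_t-measurable and ‖θ_t‖ ≤ r almost surely for each t; θ_{t+1} = θ_t − γ·η_t almost surely for each 1 ≤ t ≤ T; ‖E[η_t | 𝓕_t] − g_t‖ ≤ b almost surely for each t; and E‖η_t‖² ≤ G + λ for each t. Then Σ_{t=1}^{T} E⟨g_t, θ_t − w_t⟩ ≤ 2·T·b·r + (2r²)/γ + (2r/γ)·Σ_{t=1}^{T} ‖w_t − w_{t+1}‖ + (T·γ·(G + λ))/2. -/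

import Mathlib

/-!
Expanding `‖θₜ₊₁ - wₜ‖² = ‖θₜ - wₜ‖² - 2γ⟪ηₜ, θₜ - wₜ⟫ + γ²‖ηₜ‖²` and moving the comparator
from `wₜ` to `wₜ₊₁` at cost `4r‖wₜ - wₜ₊₁‖` gives a per-step bound in which the distances
`E‖θₜ - wₜ‖²` telescope to at most `(2r)²`. Since `θₜ - wₜ` is `𝓕ₜ`-measurable and bounded by
`2r`, the pull-out property gives `E⟪ηₜ, θₜ - wₜ⟫ = E⟪E[ηₜ | 𝓕ₜ], θₜ - wₜ⟫`, so replacing `ηₜ`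
by `gₜ` costs at most `2br` per step.
-/

open MeasureTheory
open scoped RealInnerProductSpace

section Normed

variable {Ω E : Type*} {mΩ : MeasurableSpace Ω} {μ : Measure Ω} [NormedAddCommGroup E]

theorem norm_norm_sub_sq_le_of_norm_le {x w : E} {r : ℝ} (hx : ‖x‖ ≤ r) (hw : ‖w‖ ≤ r) :
    ‖‖x - w‖ ^ 2‖ ≤ (r + r) ^ 2 := by
  rw [norm_pow, norm_norm]
  exact pow_le_pow_left₀ (norm_nonneg _) (norm_sub_le_of_le hx hw) 2

theorem integrable_norm_sub_sq_of_norm_le [IsFiniteMeasure μ] {θ : Ω → E} {w : E} {r : ℝ}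
    (hθ : AEStronglyMeasurable θ μ) (hθ_le : ∀ᵐ ω ∂μ, ‖θ ω‖ ≤ r) (hw : ‖w‖ ≤ r) :
    Integrable (fun ω => ‖θ ω - w‖ ^ 2) μ :=
  .of_bound ((hθ.sub aestronglyMeasurable_const).norm.pow 2) _
    (hθ_le.mono fun _ hω => norm_norm_sub_sq_le_of_norm_le hω hw)

theorem integral_norm_sub_sq_le_of_norm_le [IsProbabilityMeasure μ] {θ : Ω → E} {w : E}
    {r : ℝ} (hθ_le : ∀ᵐ ω ∂μ, ‖θ ω‖ ≤ r) (hw : ‖w‖ ≤ r) :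
    ∫ ω, ‖θ ω - w‖ ^ 2 ∂μ ≤ (r + r) ^ 2 := by
  calc ∫ ω, ‖θ ω - w‖ ^ 2 ∂μ ≤ ‖∫ ω, ‖θ ω - w‖ ^ 2 ∂μ‖ := Real.le_norm_self _
    _ ≤ (r + r) ^ 2 * μ.real Set.univ := norm_integral_le_of_norm_le_const
      (hθ_le.mono fun _ hω => norm_norm_sub_sq_le_of_norm_le hω hw)
    _ = (r + r) ^ 2 := by simp

end Normed

section InnerProductSpace

variable {E : Type*} [NormedAddCommGroup E] [InnerProductSpace ℝ E]

theorem norm_sub_smul_sub_sq (x v w : E) (γ : ℝ) :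
    ‖x - γ • v - w‖ ^ 2 = ‖x - w‖ ^ 2 - 2 * γ * ⟪v, x - w⟫ + γ ^ 2 * ‖v‖ ^ 2 := by
  rw [sub_right_comm, norm_sub_sq_real, real_inner_smul_right, norm_smul, mul_pow,
    Real.norm_eq_abs, sq_abs, real_inner_comm]
  ring

theorem norm_sub_sq_le_norm_sub_sq_add {x w w' : E} {r : ℝ} (hx : ‖x‖ ≤ r) (hw : ‖w‖ ≤ r)
    (hw' : ‖w'‖ ≤ r) : ‖x - w'‖ ^ 2 ≤ ‖x - w‖ ^ 2 + 4 * r * ‖w - w'‖ := by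
  have hdiff : ‖x - w'‖ ^ 2 - ‖x - w‖ ^ 2 = ⟪(x - w) + (x - w'), w - w'⟫ := by
    simp only [← real_inner_self_eq_norm_sq, inner_add_left, inner_sub_left, inner_sub_right,
      real_inner_comm x w, real_inner_comm x w', real_inner_comm w w']
    ring
  have hsum : ‖(x - w) + (x - w')‖ ≤ 4 * r := by
    linarith [norm_add_le (x - w) (x - w'), norm_sub_le_of_le hx hw, norm_sub_le_of_le hx hw']
  have := real_inner_le_norm ((x - w) + (x - w')) (w - w')
  linarith [mul_le_mul_of_nonneg_right hsum (norm_nonneg (w - w'))]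

theorem two_mul_inner_add_norm_sub_sq_le {x v w w' : E} {γ r : ℝ} (hx' : ‖x - γ • v‖ ≤ r)
    (hw : ‖w‖ ≤ r) (hw' : ‖w'‖ ≤ r) :
    2 * γ * ⟪v, x - w⟫ + ‖x - γ • v - w'‖ ^ 2
      ≤ ‖x - w‖ ^ 2 + 4 * r * ‖w - w'‖ + γ ^ 2 * ‖v‖ ^ 2 := by
  linarith [norm_sub_smul_sub_sq x v w γ, norm_sub_sq_le_norm_sub_sq_add hx' hw hw']

theorem inner_le_inner_add_of_norm_sub_le {g h y : E} {b s : ℝ} (hgh : ‖h - g‖ ≤ b)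
    (hy : ‖y‖ ≤ s) : ⟪g, y⟫ ≤ ⟪h, y⟫ + b * s := by
  have hcs := real_inner_le_norm (g - h) y
  have hbs : ‖g - h‖ * ‖y‖ ≤ b * s :=
    mul_le_mul (norm_sub_rev g h ▸ hgh) hy (norm_nonneg _) ((norm_nonneg _).trans hgh)
  rw [inner_sub_left] at hcs
  linarith

end InnerProductSpace

section Expectation

variable {Ω E : Type*} {m mΩ : MeasurableSpace Ω} {μ : Measure Ω}
  [NormedAddCommGroup E] [InnerProductSpace ℝ E]

theorem integral_inner_condExp_left [CompleteSpace E] (hm : m ≤ mΩ) [SigmaFinite (μ.trim hm)]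
    {f X : Ω → E} (hf : Integrable f μ) (hX : StronglyMeasurable[m] X)
    (hfX : Integrable (fun ω => ⟪f ω, X ω⟫) μ) :
    ∫ ω, ⟪μ[f|m] ω, X ω⟫ ∂μ = ∫ ω, ⟪f ω, X ω⟫ ∂μ := by
  rw [← integral_condExp hm (f := fun ω => ⟪f ω, X ω⟫)]
  exact integral_congr_ae
    (condExp_bilin_of_stronglyMeasurable_right (innerSL ℝ) hX hfX hf).symm

variable [IsProbabilityMeasure μ]

theorem integral_inner_le_integral_inner_add_of_norm_condExp_sub_le [CompleteSpace E]
    (hm : m ≤ mΩ) {f g X : Ω → E} {b s : ℝ} (hf : Integrable f μ)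
    (hg : AEStronglyMeasurable g μ) (hX : StronglyMeasurable[m] X)
    (hX_le : ∀ᵐ ω ∂μ, ‖X ω‖ ≤ s) (hbias : ∀ᵐ ω ∂μ, ‖μ[f|m] ω - g ω‖ ≤ b) :
    ∫ ω, ⟪g ω, X ω⟫ ∂μ ≤ ∫ ω, ⟪f ω, X ω⟫ ∂μ + b * s := by
  have hc : Integrable (μ[f|m]) μ := integrable_condExp
  have hg_int : Integrable g μ := by
    refine Integrable.mono' (hc.norm.add (integrable_const b)) hg ?_
    filter_upwards [hbias] with ω hω
    show ‖g ω‖ ≤ ‖μ[f|m] ω‖ + b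
    linarith [norm_le_norm_add_norm_sub' (g ω) (μ[f|m] ω), norm_sub_rev (g ω) (μ[f|m] ω)]
  have hint : ∀ {u : Ω → E}, Integrable u μ → Integrable (fun ω => ⟪u ω, X ω⟫) μ :=
    fun hu => (innerSL ℝ).integrable_of_bilin_of_bdd_right s hu
      (hX.mono hm).aestronglyMeasurable hX_le
  calc ∫ ω, ⟪g ω, X ω⟫ ∂μ ≤ ∫ ω, (⟪μ[f|m] ω, X ω⟫ + b * s) ∂μ := by
        refine integral_mono_ae (hint hg_int) ((hint hc).add (integrable_const _)) ?_
        filter_upwards [hbias, hX_le] with ω hb hs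
        exact inner_le_inner_add_of_norm_sub_le hb hs
    _ = ∫ ω, ⟪f ω, X ω⟫ ∂μ + b * s := by
        rw [integral_add (hint hc) (integrable_const _), integral_const, probReal_univ,
          one_smul, integral_inner_condExp_left hm hf hX (hint hf)]

theorem two_mul_integral_inner_add_integral_norm_sub_sq_le {θ θ' η : Ω → E} {w w' : E}
    {γ r : ℝ} (hθ : AEStronglyMeasurable θ μ) (hθ_le : ∀ᵐ ω ∂μ, ‖θ ω‖ ≤ r)
    (hθ'_le : ∀ᵐ ω ∂μ, ‖θ' ω‖ ≤ r) (hw : ‖w‖ ≤ r) (hw' : ‖w'‖ ≤ r) (hη : MemLp η 2 μ)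
    (hupd : ∀ᵐ ω ∂μ, θ' ω = θ ω - γ • η ω) :
    2 * γ * ∫ ω, ⟪η ω, θ ω - w⟫ ∂μ + ∫ ω, ‖θ' ω - w'‖ ^ 2 ∂μ
      ≤ ∫ ω, ‖θ ω - w‖ ^ 2 ∂μ + 4 * r * ‖w - w'‖ + γ ^ 2 * ∫ ω, ‖η ω‖ ^ 2 ∂μ := by
  have hθ' : AEStronglyMeasurable θ' μ :=
    (hθ.sub (hη.1.const_smul γ)).congr (hupd.mono fun _ h => h.symm)
  have hdist := integrable_norm_sub_sq_of_norm_le hθ hθ_le hw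
  have hdist' := integrable_norm_sub_sq_of_norm_le hθ' hθ'_le hw'
  have hη_sq : Integrable (fun ω => ‖η ω‖ ^ 2) μ := (memLp_two_iff_integrable_sq_norm hη.1).1 hη
  have hinner : Integrable (fun ω => ⟪η ω, θ ω - w⟫) μ :=
    (innerSL ℝ).integrable_of_bilin_of_bdd_right (r + r) (hη.integrable one_le_two)
      (hθ.sub aestronglyMeasurable_const) (hθ_le.mono fun _ hω => norm_sub_le_of_le hω hw)
  have hdist_add : Integrable (fun ω => ‖θ ω - w‖ ^ 2 + 4 * r * ‖w - w'‖) μ :=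
    hdist.add (integrable_const _)
  have hrhs : Integrable
      (fun ω => ‖θ ω - w‖ ^ 2 + 4 * r * ‖w - w'‖ + γ ^ 2 * ‖η ω‖ ^ 2) μ :=
    hdist_add.add (hη_sq.const_mul _)
  have pathwise : ∀ᵐ ω ∂μ, 2 * γ * ⟪η ω, θ ω - w⟫ + ‖θ' ω - w'‖ ^ 2
      ≤ ‖θ ω - w‖ ^ 2 + 4 * r * ‖w - w'‖ + γ ^ 2 * ‖η ω‖ ^ 2 := by
    filter_upwards [hupd, hθ'_le] with ω hω hω_le
    rw [hω] at hω_le ⊢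
    exact two_mul_inner_add_norm_sub_sq_le hω_le hw hw'
  calc 2 * γ * ∫ ω, ⟪η ω, θ ω - w⟫ ∂μ + ∫ ω, ‖θ' ω - w'‖ ^ 2 ∂μ
      = ∫ ω, (2 * γ * ⟪η ω, θ ω - w⟫ + ‖θ' ω - w'‖ ^ 2) ∂μ := by
        rw [integral_add (hinner.const_mul _) hdist', integral_const_mul]
    _ ≤ ∫ ω, (‖θ ω - w‖ ^ 2 + 4 * r * ‖w - w'‖ + γ ^ 2 * ‖η ω‖ ^ 2) ∂μ :=
        integral_mono_ae ((hinner.const_mul _).add hdist') hrhs pathwise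
    _ = ∫ ω, ‖θ ω - w‖ ^ 2 ∂μ + 4 * r * ‖w - w'‖ + γ ^ 2 * ∫ ω, ‖η ω‖ ^ 2 ∂μ := by
        rw [integral_add hdist_add (hη_sq.const_mul _), integral_add hdist (integrable_const _),
          integral_const, probReal_univ, one_smul, integral_const_mul]

theorem two_mul_integral_inner_add_integral_norm_sub_sq_le_of_condExp [CompleteSpace E]
    (hm : m ≤ mΩ) {θ θ' g η : Ω → E} {w w' : E} {γ r b : ℝ} (hγ : 0 ≤ γ)
    (hθ : StronglyMeasurable[m] θ) (hθ_le : ∀ᵐ ω ∂μ, ‖θ ω‖ ≤ r)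
    (hθ'_le : ∀ᵐ ω ∂μ, ‖θ' ω‖ ≤ r) (hw : ‖w‖ ≤ r) (hw' : ‖w'‖ ≤ r)
    (hg : AEStronglyMeasurable g μ) (hη : MemLp η 2 μ)
    (hupd : ∀ᵐ ω ∂μ, θ' ω = θ ω - γ • η ω) (hbias : ∀ᵐ ω ∂μ, ‖μ[η|m] ω - g ω‖ ≤ b) :
    2 * γ * ∫ ω, ⟪g ω, θ ω - w⟫ ∂μ + ∫ ω, ‖θ' ω - w'‖ ^ 2 ∂μ
      ≤ ∫ ω, ‖θ ω - w‖ ^ 2 ∂μ + 2 * γ * (b * (r + r)) + 4 * r * ‖w - w'‖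
        + γ ^ 2 * ∫ ω, ‖η ω‖ ^ 2 ∂μ := by
  have hbias_step := integral_inner_le_integral_inner_add_of_norm_condExp_sub_le hm
    (X := fun ω => θ ω - w) (hη.integrable one_le_two) hg (hθ.sub stronglyMeasurable_const)
    (hθ_le.mono fun _ hω => norm_sub_le_of_le hω hw) hbias
  have hogd_step := two_mul_integral_inner_add_integral_norm_sub_sq_le
    (hθ.mono hm).aestronglyMeasurable hθ_le hθ'_le hw hw' hη hupd
  linarith [mul_le_mul_of_nonneg_left hbias_step (by positivity : (0 : ℝ) ≤ 2 * γ)]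

end Expectation

theorem ogd_dynamic_regret_linearized_general {Ω : Type*} {mΩ : MeasurableSpace Ω}
    (P : Measure Ω) [IsProbabilityMeasure P]
    (ℱ : Filtration ℕ mΩ)
    (d T : ℕ)
    (γ r b G lam : ℝ) (hγ : 0 < γ)
    (w : ℕ → EuclideanSpace ℝ (Fin d))
    (hw : ∀ t, 1 ≤ t → t ≤ T + 1 → ‖w t‖ ≤ r)
    (θ g η : ℕ → Ω → EuclideanSpace ℝ (Fin d))
    (hθmeas : ∀ t, 1 ≤ t → t ≤ T + 1 → StronglyMeasurable[ℱ t] (θ t))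
    (hθbd : ∀ t, 1 ≤ t → t ≤ T + 1 → ∀ᵐ ω ∂P, ‖θ t ω‖ ≤ r)
    (hgmeas : ∀ t, 1 ≤ t → t ≤ T → StronglyMeasurable[ℱ t] (g t))
    (hηL2 : ∀ t, 1 ≤ t → t ≤ T → MemLp (η t) 2 P)
    (hupd : ∀ t, 1 ≤ t → t ≤ T → ∀ᵐ ω ∂P, θ (t + 1) ω = θ t ω - γ • η t ω)
    (hbias : ∀ t, 1 ≤ t → t ≤ T → ∀ᵐ ω ∂P, ‖(P[η t|ℱ t]) ω - g t ω‖ ≤ b)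
    (hsecond : ∀ t, 1 ≤ t → t ≤ T → (∫ ω, ‖η t ω‖ ^ 2 ∂P) ≤ G + lam) :
    ∑ t ∈ Finset.Icc 1 T, (∫ ω, ⟪g t ω, θ t ω - w t⟫ ∂P) ≤
      2 * (T : ℝ) * b * r + 2 * r ^ 2 / γ
        + (2 * r / γ) * ∑ t ∈ Finset.Icc 1 T, ‖w t - w (t + 1)‖
        + (T : ℝ) * γ * (G + lam) / 2 := by
  set F : ℕ → ℝ := fun t => ∫ ω, ‖θ t ω - w t‖ ^ 2 ∂P
  have hstep : ∀ t ∈ Finset.Icc 1 T,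
      2 * γ * ∫ ω, ⟪g t ω, θ t ω - w t⟫ ∂P + (F (t + 1) - F t)
        ≤ 2 * γ * (b * (r + r)) + 4 * r * ‖w t - w (t + 1)‖ + γ ^ 2 * (G + lam) := by
    intro t ht
    obtain ⟨h1, hT⟩ := Finset.mem_Icc.mp ht
    have := two_mul_integral_inner_add_integral_norm_sub_sq_le_of_condExp (ℱ.le t) hγ.le
      (hθmeas t h1 (by omega)) (hθbd t h1 (by omega)) (hθbd (t + 1) (by omega) (by omega))
      (hw t h1 (by omega)) (hw (t + 1) (by omega) (by omega))
      ((hgmeas t h1 hT).mono (ℱ.le t)).aestronglyMeasurable (hηL2 t h1 hT) (hupd t h1 hT)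
      (hbias t h1 hT)
    linarith [mul_le_mul_of_nonneg_left (hsecond t h1 hT) (sq_nonneg γ)]
  have hsum := Finset.sum_le_sum hstep
  rw [Finset.sum_add_distrib, ← Finset.Ico_add_one_right_eq_Icc,
    Finset.sum_Ico_sub F (by omega : 1 ≤ T + 1), Finset.Ico_add_one_right_eq_Icc] at hsum
  simp only [Finset.sum_add_distrib, ← Finset.mul_sum, Finset.sum_const, Nat.card_Icc,
    Nat.add_sub_cancel, nsmul_eq_mul] at hsum
  have hF_last : 0 ≤ F (T + 1) := integral_nonneg fun ω => sq_nonneg _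
  have hF_first : F 1 ≤ (r + r) ^ 2 :=
    integral_norm_sub_sq_le_of_norm_le (hθbd 1 le_rfl (by omega)) (hw 1 le_rfl (by omega))
  rw [show 2 * (T : ℝ) * b * r + 2 * r ^ 2 / γ
        + (2 * r / γ) * ∑ t ∈ Finset.Icc 1 T, ‖w t - w (t + 1)‖ + (T : ℝ) * γ * (G + lam) / 2
      = (T * (2 * γ * (b * (r + r))) + (r + r) ^ 2
        + 4 * r * ∑ t ∈ Finset.Icc 1 T, ‖w t - w (t + 1)‖ + T * (γ ^ 2 * (G + lam))) / (2 * γ)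
      by field_simp; ring, le_div_iff₀ (by positivity)]
  linarith

/-- Linearized (inner-product) form of the dynamic regret bound for online gradient
descent with noisy, biased gradient estimates: `Σ E⟪g t, θ t − w t⟫` is at most
`2Tbr + 2r²/γ + (2r/γ)·V + Tγ(G+λ)/2`. -/
theorem ogd_dynamic_regret_linearized {Ω : Type*} {mΩ : MeasurableSpace Ω}
    (P : Measure Ω) [IsProbabilityMeasure P]
    (ℱ : Filtration ℕ mΩ)
    (d T : ℕ) (hd : 0 < d) (hT : 0 < T)
    (γ r b G lam : ℝ) (hγ : 0 < γ) (hr : 0 ≤ r) (hb : 0 ≤ b) (hG : 0 ≤ G) (hlam : 0 ≤ lam)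
    (w : ℕ → EuclideanSpace ℝ (Fin d))
    (hw : ∀ t, 1 ≤ t → t ≤ T + 1 → ‖w t‖ ≤ r)
    (θ g η : ℕ → Ω → EuclideanSpace ℝ (Fin d))
    (hθmeas : ∀ t, 1 ≤ t → t ≤ T + 1 → StronglyMeasurable[ℱ t] (θ t))
    (hθbd : ∀ t, 1 ≤ t → t ≤ T + 1 → ∀ᵐ ω ∂P, ‖θ t ω‖ ≤ r)
    (hgmeas : ∀ t, 1 ≤ t → t ≤ T → StronglyMeasurable[ℱ t] (g t))
    (hgbd : ∀ t, 1 ≤ t → t ≤ T → ∃ C, ∀ ω, ‖g t ω‖ ≤ C)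
    (hηL2 : ∀ t, 1 ≤ t → t ≤ T → MemLp (η t) 2 P)
    (hupd : ∀ t, 1 ≤ t → t ≤ T → ∀ᵐ ω ∂P, θ (t + 1) ω = θ t ω - γ • η t ω)
    (hbias : ∀ t, 1 ≤ t → t ≤ T → ∀ᵐ ω ∂P, ‖(P[η t|ℱ t]) ω - g t ω‖ ≤ b)
    (hsecond : ∀ t, 1 ≤ t → t ≤ T → (∫ ω, ‖η t ω‖ ^ 2 ∂P) ≤ G + lam) :
    ∑ t ∈ Finset.Icc 1 T, (∫ ω, ⟪g t ω, θ t ω - w t⟫ ∂P) ≤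
      2 * (T : ℝ) * b * r + 2 * r ^ 2 / γ
        + (2 * r / γ) * ∑ t ∈ Finset.Icc 1 T, ‖w t - w (t + 1)‖
        + (T : ℝ) * γ * (G + lam) / 2 :=
  ogd_dynamic_regret_linearized_general P ℱ d T γ r b G lam hγ w hw θ g η hθmeas hθbd hgmeas hηL2
    hupd hbias hsecond
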